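/- arXiv:1507.00411 — 4 statements merged into one kernel-verified Lean document; each statement's English description precedes it below -/
import Mathlib

section
/- For every pattern poset P and prime power q, the number of orbits of the co-adjoint action of U_P(q) on the dual space 𝒰_P(q)* equals the number of orbits of the adjoint action of U_P(q) on 𝒰_P(q), and both are equal to k(U_P(q)), the number of conjugacy classes of U_P(q). -/
/-
Common framework: pattern posets, pattern algebras and pattern groups
(in the sense of Isaacs), the spaces `L_P(q)` realizing the dual of the pattern
algebra, the co-adjoint action, poset systems `(P, m, A)` and their orbit counts
`k(P, m, A; q)`, and combinatorial operations on pattern posets, following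
"On Higman's conjecture" by Pak and Soffer.
-/

open Matrix

/-- A pattern poset on `{0,…,n-1}`: a strict partial order on `Fin n` that has the
standard order of the integers as a linear extension. -/
structure PatternPoset (n : ℕ) where
  lt : Fin n → Fin n → Prop
  lt_trans : ∀ {i j k : Fin n}, lt i j → lt j k → lt i k
  lt_le : ∀ {i j : Fin n}, lt i j → (i : ℕ) < (j : ℕ)

namespace PatternPoset

variable {n : ℕ}

theorem lt_irrefl (P : PatternPoset n) (i : Fin n) : ¬ P.lt i i :=
  fun h => Nat.lt_irrefl _ (P.lt_le h)

theorem ne_of_lt (P : PatternPoset n) {i j : Fin n} (h : P.lt i j) : i ≠ j := by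
  intro e; subst e; exact P.lt_irrefl i h

/-- The pattern algebra `𝒰_P(q)`, as a subspace of the `n × n` matrices:
matrices supported on the cells `(i,j)` with `i ≺ j`. -/
def patternAlg (P : PatternPoset n) (F : Type*) [Field F] :
    Submodule F (Matrix (Fin n) (Fin n) F) where
  carrier := {X | ∀ i j : Fin n, ¬ P.lt i j → X i j = 0}
  add_mem' := by
    intro a b ha hb i j h
    simp [Matrix.add_apply, ha i j h, hb i j h]
  zero_mem' := by intro i j h; simp
  smul_mem' := by
    intro c a ha i j h
    simp [Matrix.smul_apply, ha i j h]

theorem mul_mem_patternAlg {P : PatternPoset n} {F : Type*} [Field F]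
    {X Y : Matrix (Fin n) (Fin n) F} (hX : X ∈ P.patternAlg F) (hY : Y ∈ P.patternAlg F) :
    X * Y ∈ P.patternAlg F := by
  intro i j h
  rw [Matrix.mul_apply]
  apply Finset.sum_eq_zero
  intro k _
  by_cases h1 : P.lt i k
  · by_cases h2 : P.lt k j
    · exact absurd (P.lt_trans h1 h2) h
    · rw [hY k j h2, mul_zero]
  · rw [hX i k h1, zero_mul]

theorem pow_apply_ne_zero {P : PatternPoset n} {F : Type*} [Field F]
    {X : Matrix (Fin n) (Fin n) F} (hX : X ∈ P.patternAlg F) :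
    ∀ t (i j : Fin n), (X ^ t) i j ≠ 0 → (i : ℕ) + t ≤ (j : ℕ) := by
  intro t
  induction t with
  | zero =>
    intro i j h
    rw [pow_zero] at h
    by_cases hij : i = j
    · subst hij; simp
    · exact absurd (Matrix.one_apply_ne hij) h
  | succ t ih =>
    intro i j h
    rw [pow_succ, Matrix.mul_apply] at h
    obtain ⟨k, -, hk⟩ := Finset.exists_ne_zero_of_sum_ne_zero h
    have h1 : (X ^ t) i k ≠ 0 := fun e => hk (by rw [e, zero_mul])
    have h2 : X k j ≠ 0 := fun e => hk (by rw [e, mul_zero])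
    have h3 : P.lt k j := by by_contra hc; exact h2 (hX k j hc)
    have h4 := ih i k h1
    have h5 := P.lt_le h3
    omega

theorem pow_card_eq_zero {P : PatternPoset n} {F : Type*} [Field F]
    {X : Matrix (Fin n) (Fin n) F} (hX : X ∈ P.patternAlg F) : X ^ n = 0 := by
  ext i j
  simp only [Matrix.zero_apply]
  by_contra h
  have h1 := pow_apply_ne_zero hX n i j h
  have h2 := j.isLt
  omega

theorem pow_succ_mem_patternAlg {P : PatternPoset n} {F : Type*} [Field F]
    {X : Matrix (Fin n) (Fin n) F} (hX : X ∈ P.patternAlg F) (t : ℕ) :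
    X ^ (t + 1) ∈ P.patternAlg F := by
  induction t with
  | zero => simpa using hX
  | succ t ih => rw [pow_succ]; exact mul_mem_patternAlg ih hX

theorem inv_sub_one_mem {P : PatternPoset n} {F : Type*} [Field F]
    {a : (Matrix (Fin n) (Fin n) F)ˣ}
    (ha : ((a : Matrix (Fin n) (Fin n) F) - 1) ∈ P.patternAlg F) :
    (((a⁻¹ : (Matrix (Fin n) (Fin n) F)ˣ) : Matrix (Fin n) (Fin n) F) - 1)
      ∈ P.patternAlg F := by
  rcases Nat.eq_zero_or_pos n with hn | hn
  · subst hn; intro i j _; exact i.elim0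
  obtain ⟨m, rfl⟩ : ∃ m, n = m + 1 := ⟨n - 1, by omega⟩
  set X : Matrix (Fin (m + 1)) (Fin (m + 1)) F :=
    (a : Matrix (Fin (m + 1)) (Fin (m + 1)) F) - 1 with hXdef
  have hXmem : -X ∈ P.patternAlg F := (P.patternAlg F).neg_mem ha
  have hXn : (-X) ^ (m + 1) = 0 := pow_card_eq_zero hXmem
  have key : (∑ t ∈ Finset.range (m + 1), (-X) ^ t) *
      (a : Matrix (Fin (m + 1)) (Fin (m + 1)) F) = 1 := by
    have hgeom := geom_sum_mul (-X) (m + 1)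
    rw [hXn] at hgeom
    have ha' : (a : Matrix (Fin (m + 1)) (Fin (m + 1)) F) = -((-X) - 1) := by
      rw [hXdef]; abel
    rw [ha', mul_neg, hgeom]
    simp
  have hinv : ((a⁻¹ : (Matrix (Fin (m + 1)) (Fin (m + 1)) F)ˣ) :
        Matrix (Fin (m + 1)) (Fin (m + 1)) F)
      = ∑ t ∈ Finset.range (m + 1), (-X) ^ t :=
    Units.inv_eq_of_mul_eq_one_left key
  rw [hinv]
  have hsplit : (∑ t ∈ Finset.range (m + 1), (-X) ^ t) - 1
      = ∑ t ∈ Finset.range m, (-X) ^ (t + 1) := by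
    rw [Finset.sum_range_succ' (fun t => (-X) ^ t) m]
    simp
  rw [hsplit]
  exact Submodule.sum_mem _ (fun t _ => pow_succ_mem_patternAlg hXmem t)

theorem entry_cases {P : PatternPoset n} {F : Type*} [Field F]
    {M : Matrix (Fin n) (Fin n) F} (hM : (M - 1) ∈ P.patternAlg F)
    {i k : Fin n} (h : M i k ≠ 0) : i = k ∨ P.lt i k := by
  by_contra hc
  push_neg at hc
  apply h
  have h1 := hM i k hc.2
  have h2 : (1 : Matrix (Fin n) (Fin n) F) i k = 0 := Matrix.one_apply_ne hc.1
  calc M i k = (M - 1) i k + (1 : Matrix (Fin n) (Fin n) F) i k := by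
        simp [Matrix.sub_apply]
    _ = 0 := by rw [h1, h2, add_zero]

theorem conj_entry_zero {P : PatternPoset n} {F : Type*} [Field F]
    {A B Y : Matrix (Fin n) (Fin n) F}
    (hA : (A - 1) ∈ P.patternAlg F) (hB : (B - 1) ∈ P.patternAlg F)
    (i j : Fin n)
    (hzero : ∀ k l : Fin n, (i = k ∨ P.lt i k) → (l = j ∨ P.lt l j) → Y k l = 0) :
    (A * Y * B) i j = 0 := by
  rw [Matrix.mul_apply]
  apply Finset.sum_eq_zero
  intro l _
  rw [Matrix.mul_apply, Finset.sum_mul]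
  apply Finset.sum_eq_zero
  intro k _
  by_cases hAik : A i k = 0
  · rw [hAik, zero_mul, zero_mul]
  by_cases hBlj : B l j = 0
  · rw [hBlj, mul_zero]
  rw [hzero k l (entry_cases hA hAik) (entry_cases hB hBlj), mul_zero, zero_mul]

/-- The pattern group `U_P(q) = {1 + X : X ∈ 𝒰_P(q)}`, as a subgroup of the units of the
matrix ring. -/
def patternGroup (P : PatternPoset n) (F : Type*) [Field F] :
    Subgroup (Matrix (Fin n) (Fin n) F)ˣ where
  carrier := {g | ((g : Matrix (Fin n) (Fin n) F) - 1) ∈ P.patternAlg F}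
  one_mem' := by
    simp only [Set.mem_setOf_eq, Units.val_one, sub_self]
    exact (P.patternAlg F).zero_mem
  mul_mem' := by
    intro a b ha hb
    simp only [Set.mem_setOf_eq, Units.val_mul] at *
    have h : (a : Matrix (Fin n) (Fin n) F) * b - 1 =
        ((a : Matrix (Fin n) (Fin n) F) - 1) * ((b : Matrix (Fin n) (Fin n) F) - 1)
          + (((a : Matrix (Fin n) (Fin n) F) - 1) + ((b : Matrix (Fin n) (Fin n) F) - 1)) := by
      noncomm_ring
    rw [h]
    exact (P.patternAlg F).add_mem (mul_mem_patternAlg ha hb) ((P.patternAlg F).add_mem ha hb)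
  inv_mem' := fun ha => inv_sub_one_mem ha

/-- `k(P; q)`: the number of conjugacy classes of the pattern group `U_P(q)`. -/
noncomputable def kOf (P : PatternPoset n) (F : Type*) [Field F] : ℕ :=
  Nat.card (ConjClasses (P.patternGroup F))

/-- The chain poset `C_n`, whose pattern group is the full unitriangular group `U_n(q)`. -/
def chainPoset (n : ℕ) : PatternPoset n where
  lt i j := (i : ℕ) < (j : ℕ)
  lt_trans := fun h1 h2 => Nat.lt_trans h1 h2
  lt_le := fun h => h

/-- The induced subposet `P − m`, obtained by deleting the element `m`. -/
def delete (P : PatternPoset (n + 1)) (m : Fin (n + 1)) : PatternPoset n where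
  lt i j := P.lt (m.succAbove i) (m.succAbove j)
  lt_trans := fun h1 h2 => P.lt_trans h1 h2
  lt_le := fun {i j} h => by
    have h2 : m.succAbove i < m.succAbove j := by
      rw [Fin.lt_def]; exact P.lt_le h
    exact Fin.lt_def.mp (Fin.succAbove_lt_succAbove_iff.mp h2)

/-- The dual poset `P*`, relabeled by `i ↦ n + 1 − i` so that the standard order is
again a linear extension. -/
def dual (P : PatternPoset n) : PatternPoset n where
  lt i j := P.lt j.rev i.rev
  lt_trans := fun h1 h2 => P.lt_trans h2 h1
  lt_le := fun {i j} h => by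
    have h1 : j.rev < i.rev := by rw [Fin.lt_def]; exact P.lt_le h
    exact Fin.lt_def.mp (Fin.rev_lt_rev.mp h1)

/-- The disjoint union `P ⨿ Q` of two pattern posets. -/
def disjUnion {m n : ℕ} (P : PatternPoset m) (Q : PatternPoset n) :
    PatternPoset (m + n) where
  lt x y :=
    match finSumFinEquiv.symm x, finSumFinEquiv.symm y with
    | Sum.inl a, Sum.inl b => P.lt a b
    | Sum.inr a, Sum.inr b => Q.lt a b
    | _, _ => False
  lt_trans := by
    intro i j k hij hjk
    rcases hi : finSumFinEquiv.symm i with a | a <;>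
      rcases hj : finSumFinEquiv.symm j with b | b <;>
        rcases hk : finSumFinEquiv.symm k with c | c <;>
          simp only [hi, hj, hk] at hij hjk ⊢ <;>
            first
              | exact P.lt_trans hij hjk
              | exact Q.lt_trans hij hjk
  lt_le := by
    intro i j h
    rcases hi : finSumFinEquiv.symm i with a | a <;>
      rcases hj : finSumFinEquiv.symm j with b | b <;>
        simp only [hi, hj] at h
    · have hi' : i = Fin.castAdd _ a := by
        rw [← finSumFinEquiv_apply_left, ← hi, Equiv.apply_symm_apply]
      have hj' : j = Fin.castAdd _ b := by
        rw [← finSumFinEquiv_apply_left, ← hj, Equiv.apply_symm_apply]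
      rw [hi', hj']
      exact P.lt_le h
    · have hi' : i = Fin.natAdd _ a := by
        rw [← finSumFinEquiv_apply_right, ← hi, Equiv.apply_symm_apply]
      have hj' : j = Fin.natAdd _ b := by
        rw [← finSumFinEquiv_apply_right, ← hj, Equiv.apply_symm_apply]
      rw [hi', hj']
      simpa using Q.lt_le h

/-- The subspace of matrices quotiented away in `L_P(q)`:
those vanishing on all cells `(i,j)` with `j ≺ i`. -/
def lowQuot (P : PatternPoset n) (F : Type*) [Field F] :
    Submodule F (Matrix (Fin n) (Fin n) F) where
  carrier := {X | ∀ i j : Fin n, P.lt j i → X i j = 0}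
  add_mem' := by
    intro a b ha hb i j h
    simp [Matrix.add_apply, ha i j h, hb i j h]
  zero_mem' := by intro i j h; simp
  smul_mem' := by
    intro c a ha i j h
    simp [Matrix.smul_apply, ha i j h]

/-- The space `L_P(q)`, realizing the dual `𝒰_P(q)*` as a quotient of the
space of all `n × n` matrices. -/
abbrev LSpace (P : PatternPoset n) (F : Type*) [Field F] :=
  Matrix (Fin n) (Fin n) F ⧸ P.lowQuot F

end PatternPoset

/-- Conjugation `X ↦ g X g⁻¹` by a unit, as a linear map on matrices. -/
def conjLin {n : ℕ} (F : Type*) [Field F] (g : (Matrix (Fin n) (Fin n) F)ˣ) :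
    Matrix (Fin n) (Fin n) F →ₗ[F] Matrix (Fin n) (Fin n) F where
  toFun X := (g : Matrix (Fin n) (Fin n) F) * X *
    ((g⁻¹ : (Matrix (Fin n) (Fin n) F)ˣ) : Matrix (Fin n) (Fin n) F)
  map_add' X Y := by (try dsimp only); rw [mul_add, add_mul]
  map_smul' c X := by (try dsimp only); rw [mul_smul_comm, smul_mul_assoc]; rfl

namespace PatternPoset

variable {n : ℕ}

/-- The co-adjoint action `K_g(X) = g X g⁻¹` of the pattern group on `L_P(q)`. -/
noncomputable def coadj (P : PatternPoset n) (F : Type*) [Field F]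
    (g : P.patternGroup F) : P.LSpace F →ₗ[F] P.LSpace F :=
  Submodule.mapQ _ _ (conjLin F (g : (Matrix (Fin n) (Fin n) F)ˣ)) (by
    intro Y hY
    simp only [Submodule.mem_comap]
    have hg : ((g : (Matrix (Fin n) (Fin n) F)ˣ) : Matrix (Fin n) (Fin n) F) - 1
        ∈ P.patternAlg F := g.2
    have hginv : (((g : (Matrix (Fin n) (Fin n) F)ˣ)⁻¹ : (Matrix (Fin n) (Fin n) F)ˣ) :
        Matrix (Fin n) (Fin n) F) - 1 ∈ P.patternAlg F := inv_sub_one_mem g.2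
    intro i j hji
    apply conj_entry_zero hg hginv
    intro k l hik hlj
    apply hY k l
    rcases hik with rfl | hik <;> rcases hlj with rfl | hlj
    · exact hji
    · exact P.lt_trans hlj hji
    · exact P.lt_trans hji hik
    · exact P.lt_trans (P.lt_trans hlj hji) hik)

/-- The poset `P^(m)`: the poset on the same ground set whose only relations
are `x ≺ m` for `x ≺_P m`. -/
def restrictTo (P : PatternPoset n) (m : Fin n) : PatternPoset n where
  lt x y := y = m ∧ P.lt x y
  lt_trans := fun h1 h2 => ⟨h2.1, P.lt_trans h1.2 h2.2⟩
  lt_le := fun h => P.lt_le h.2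

/-- The canonical projection `π : L_P(q) → L_{P^(m)}(q)`. -/
noncomputable def projL (P : PatternPoset n) (m : Fin n) (F : Type*) [Field F] :
    P.LSpace F →ₗ[F] (P.restrictTo m).LSpace F :=
  Submodule.mapQ _ _ LinearMap.id (by
    intro X hX
    simp only [Submodule.mem_comap, LinearMap.id_coe, id_eq]
    intro i j h
    exact hX i j h.2)

end PatternPoset

/-- The elementary transvection `E_{i,j}(α) = 1 + α e_{i,j}` as a unit of the matrix ring. -/
def transvectionUnit {n : ℕ} {F : Type*} [Field F] (i j : Fin n) (hij : i ≠ j) (α : F) :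
    (Matrix (Fin n) (Fin n) F)ˣ where
  val := 1 + Matrix.single i j α
  inv := 1 + Matrix.single i j (-α)
  val_inv := by
    have h0 : Matrix.single i j α * Matrix.single i j (-α) = 0 :=
      Matrix.single_mul_single_of_ne (h := hij.symm) ..
    have h1 : Matrix.single i j α + Matrix.single i j (-α) = 0 := by
      rw [← Matrix.single_add]; simp
    rw [add_mul, mul_add, mul_add, one_mul, mul_one, h0]
    rw [add_zero, add_assoc, one_mul, add_comm (Matrix.single i j (-α)), h1, add_zero]
  inv_val := by
    have h0 : Matrix.single i j (-α) * Matrix.single i j α = 0 :=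
      Matrix.single_mul_single_of_ne (h := hij.symm) ..
    have h1 : Matrix.single i j (-α) + Matrix.single i j α = 0 := by
      rw [← Matrix.single_add]; simp
    rw [add_mul, mul_add, mul_add, one_mul, mul_one, h0]
    rw [add_zero, add_assoc, one_mul, add_comm (Matrix.single i j α), h1, add_zero]

/-- A poset system `(P, m, A)`: a pattern poset `P`, a maximal element `m`,
and an anti-chain `A ⊆ lb(m)`. -/
structure PosetSystem (n : ℕ) where
  P : PatternPoset n
  m : Fin n
  m_max : ∀ x, ¬ P.lt m x
  A : Finset (Fin n)
  A_lb : ∀ a ∈ A, P.lt a m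
  A_anti : ∀ a ∈ A, ∀ b ∈ A, ¬ P.lt a b

namespace PosetSystem

variable {n : ℕ}

/-- The element `1_A = Σ_{a ∈ A} e_{m,a}` of `L_{P^(m)}(q)`. -/
noncomputable def oneA (S : PosetSystem n) (F : Type*) [Field F] :
    (S.P.restrictTo S.m).LSpace F :=
  Submodule.Quotient.mk (∑ a ∈ S.A, Matrix.single S.m a (1 : F))

/-- The action of `U_P(q)` on `L_{P^(m)}(q)` induced by the co-adjoint action. -/
noncomputable def coadjQ (S : PosetSystem n) (F : Type*) [Field F]
    (g : S.P.patternGroup F) :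
    (S.P.restrictTo S.m).LSpace F →ₗ[F] (S.P.restrictTo S.m).LSpace F :=
  Submodule.mapQ _ _ (conjLin F (g : (Matrix (Fin n) (Fin n) F)ˣ)) (by
    intro Y hY
    simp only [Submodule.mem_comap]
    have hg : ((g : (Matrix (Fin n) (Fin n) F)ˣ) : Matrix (Fin n) (Fin n) F) - 1
        ∈ S.P.patternAlg F := g.2
    have hginv : (((g : (Matrix (Fin n) (Fin n) F)ˣ)⁻¹ : (Matrix (Fin n) (Fin n) F)ˣ) :
        Matrix (Fin n) (Fin n) F) - 1 ∈ S.P.patternAlg F :=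
      PatternPoset.inv_sub_one_mem g.2
    intro i j hji
    obtain ⟨him, hjilt⟩ := hji
    apply PatternPoset.conj_entry_zero hg hginv
    intro k l hik hlj
    have hk : k = S.m := by
      rcases hik with rfl | hik
      · exact him
      · rw [him] at hik; exact absurd hik (S.m_max k)
    have hlm : S.P.lt l S.m := by
      rcases hlj with rfl | hlj
      · rw [← him]; exact hjilt
      · rw [him] at hjilt; exact S.P.lt_trans hlj hjilt
    subst hk
    exact hY S.m l ⟨rfl, hlm⟩)

/-- The stabilizer of `1_A` in `U_P(q)` for the induced action on `L_{P^(m)}(q)`. -/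
noncomputable def stab (S : PosetSystem n) (F : Type*) [Field F] :
    Set (S.P.patternGroup F) :=
  {g | S.coadjQ F g (S.oneA F) = S.oneA F}

/-- The fiber `π⁻¹(1_A) ⊆ L_P(q)`. -/
noncomputable def fiber (S : PosetSystem n) (F : Type*) [Field F] :
    Set (S.P.LSpace F) :=
  {X | S.P.projL S.m F X = S.oneA F}

/-- `k(P, m, A; q)`: the number of orbits of `Stab_{U_P(q)}(1_A)` acting on the fiber
`π⁻¹(1_A)` under the co-adjoint action, counted as the number of distinct orbit sets. -/
noncomputable def systemK (S : PosetSystem n) (F : Type*) [Field F] : ℕ :=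
  Nat.card {O : Set (S.P.LSpace F) // ∃ X ∈ S.fiber F,
    O = {Y | ∃ g ∈ S.stab F, S.P.coadj F g X = Y}}

/-- The poset `D(S)`: delete from `P` every relation `(a, x)` with `a ∈ A`,
`a ≺ x ≺ m`, and `A ∩ lb(x) = {a}`. -/
def D (S : PosetSystem n) : PatternPoset n where
  lt x y := S.P.lt x y ∧
    ¬ (x ∈ S.A ∧ S.P.lt y S.m ∧ ∀ b ∈ S.A, S.P.lt b y → b = x)
  lt_trans := by
    rintro i j k ⟨hij, hi⟩ ⟨hjk, -⟩
    refine ⟨S.P.lt_trans hij hjk, ?_⟩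
    rintro ⟨hiA, hkm, huniq⟩
    exact hi ⟨hiA, S.P.lt_trans hjk hkm, fun b hb hbj => huniq b hb (S.P.lt_trans hbj hjk)⟩
  lt_le := fun h => S.P.lt_le h.1

/-- `D(S)` together with the same `m` and `A`, as a poset system. -/
def DSys (S : PosetSystem n) : PosetSystem n where
  P := S.D
  m := S.m
  m_max := fun x h => S.m_max x h.1
  A := S.A
  A_lb := fun a ha => ⟨S.A_lb a ha, fun h => S.P.lt_irrefl S.m h.2.1⟩
  A_anti := fun a ha b hb h => S.A_anti a ha b hb h.1

end PosetSystem

/-- The adjoint action `Ad_g(X) = g X g⁻¹` of the pattern group on the pattern algebra. -/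
noncomputable def adLin (n : ℕ) (P : PatternPoset n) (F : Type) [Field F]
    (g : P.patternGroup F) : P.patternAlg F →ₗ[F] P.patternAlg F :=
  LinearMap.restrict (conjLin F (g : (Matrix (Fin n) (Fin n) F)ˣ))
    (p := P.patternAlg F) (q := P.patternAlg F) (by
      intro Y hY
      have hg : ((g : (Matrix (Fin n) (Fin n) F)ˣ) : Matrix (Fin n) (Fin n) F) - 1
          ∈ P.patternAlg F := g.2
      have hginv := PatternPoset.inv_sub_one_mem (P := P) g.2
      intro i j hij
      apply PatternPoset.conj_entry_zero hg hginv
      intro k l hik hlj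
      by_cases hkl : P.lt k l
      · exfalso
        apply hij
        rcases hik with rfl | hik <;> rcases hlj with rfl | hlj
        · exact hkl
        · exact P.lt_trans hkl hlj
        · exact P.lt_trans hik hkl
        · exact P.lt_trans (P.lt_trans hik hkl) hlj
      · exact hY k l hkl)

/-- The number of orbits of the adjoint action of `U_P(q)` on `𝒰_P(q)`. -/
noncomputable def adjOrbitCount (n : ℕ) (P : PatternPoset n) (F : Type) [Field F] : ℕ :=
  Nat.card {O : Set (P.patternAlg F) //
    ∃ X, O = {Y | ∃ g : P.patternGroup F, adLin n P F g X = Y}}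

/-- The number of orbits of the co-adjoint action `K_g(f) = f ∘ Ad_{g⁻¹}` of `U_P(q)` on
the dual space `𝒰_P(q)*`. -/
noncomputable def coadjOrbitCount (n : ℕ) (P : PatternPoset n) (F : Type) [Field F] : ℕ :=
  Nat.card {O : Set (Module.Dual F (P.patternAlg F)) //
    ∃ f, O = {h | ∃ g : P.patternGroup F, f ∘ₗ adLin n P F g⁻¹ = h}}

/-!
The map `g ↦ g - 1` is a bijection `U_P(q) → 𝒰_P(q)` carrying conjugation to the adjoint
action, so adjoint orbits are conjugacy classes. By Burnside's lemma the number of orbits is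
determined by the fixed-point counts. A functional is fixed by `g` iff it vanishes on the range
of `Ad_g - 1`; these functionals form the dual of the cokernel of `Ad_g - 1`, which has the
dimension of its kernel, the space of vectors fixed by `g`.
-/

open MulAction Module

section OrbitCounting

variable {G α β : Type*} [Group G] [MulAction G α] [MulAction G β]

theorem card_orbitSets_eq_card_orbitRel_quotient :
    Nat.card {O : Set α // ∃ x, O = orbit G x} = Nat.card (orbitRel.Quotient G α) := by
  rw [← Nat.card_range_of_injective orbitRel.Quotient.orbit_injective]
  refine Nat.card_congr (Equiv.subtypeEquivRight fun O => ?_)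
  simp only [Set.mem_range, Quotient.exists, orbitRel.Quotient.orbit_mk, eq_comm]

theorem card_conjClasses_eq_card_orbitRel_quotient (e : G ≃ α)
    (he : ∀ c g, e (c * g * c⁻¹) = c • e g) :
    Nat.card (ConjClasses G) = Nat.card (orbitRel.Quotient G α) := by
  refine Nat.card_congr (Quotient.congr e fun a b => ?_)
  change IsConj a b ↔ e a ∈ orbit G (e b)
  rw [isConj_comm]
  simp only [isConj_iff, mem_orbit_iff, ← he, e.apply_eq_iff_eq]

theorem card_orbitRel_quotient_eq_of_card_fixedBy_eq [Finite G] [Finite α] [Finite β]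
    (h : ∀ g : G, Nat.card (fixedBy α g) = Nat.card (fixedBy β g)) :
    Nat.card (orbitRel.Quotient G α) = Nat.card (orbitRel.Quotient G β) := by
  classical
  have := Fintype.ofFinite G
  have := Fintype.ofFinite α
  have := Fintype.ofFinite β
  have hα := sum_card_fixedBy_eq_card_orbits_mul_card_group G α
  have hβ := sum_card_fixedBy_eq_card_orbits_mul_card_group G β
  simp only [← Nat.card_eq_fintype_card, h] at hα hβ
  exact Nat.eq_of_mul_eq_mul_right Nat.card_pos (hα.symm.trans hβ)

end OrbitCounting

theorem LinearMap.card_fixedPoints_dualMap {F V : Type*} [Field F] [AddCommGroup V] [Module F V]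
    [FiniteDimensional F V] (L : V →ₗ[F] V) :
    Nat.card {f : Dual F V | L.dualMap f = f} = Nat.card {x : V | L x = x} := by
  have hDualFix : {f : Dual F V | L.dualMap f = f} = (range (L - id)).dualAnnihilator := by
    ext f
    simp only [Set.mem_ofPred_eq, SetLike.mem_coe, ← ker_dualMap_eq_dualAnnihilator_range,
      mem_ker, dualMap_apply', comp_sub, comp_id, sub_eq_zero]
  have hFix : {x : V | L x = x} = ker (L - id) := by
    ext x; simp [sub_eq_zero]
  have hQuot := (range (L - id)).finrank_quotient_add_finrank
  have hRank := finrank_range_add_finrank_ker (L - id)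
  have hDim : finrank F (Dual F (V ⧸ range (L - id))) = finrank F (ker (L - id)) := by
    rw [Subspace.dual_finrank_eq]
    omega
  rw [hDualFix, hFix]
  exact Nat.card_congr ((range (L - id)).dualQuotEquivDualAnnihilator.symm.trans
    (LinearEquiv.ofFinrankEq _ _ hDim)).toEquiv

namespace PatternPoset

variable {n : ℕ} (P : PatternPoset n) (F : Type) [Field F]

noncomputable def adRep : Representation F (P.patternGroup F) (P.patternAlg F) where
  toFun := adLin n P F
  map_one' := LinearMap.ext fun X => Subtype.ext (by simp [adLin, conjLin])
  map_mul' a b := LinearMap.ext fun X => Subtype.ext (by simp [adLin, conjLin, mul_assoc])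

variable {P F} in
noncomputable instance : MulAction (P.patternGroup F) (P.patternAlg F) :=
  MulAction.compHom _ (P.adRep F)

-- `(P.adRep F).dual g f = f ∘ₗ adLin n P F g⁻¹` is the co-adjoint action `K_g f`.
variable {P F} in
noncomputable instance : MulAction (P.patternGroup F) (Dual F (P.patternAlg F)) :=
  MulAction.compHom _ (P.adRep F).dual

theorem coe_smul_patternAlg (c : P.patternGroup F) (X : P.patternAlg F) :
    ((c • X : P.patternAlg F) : Matrix (Fin n) (Fin n) F) =
      ((c : (Matrix (Fin n) (Fin n) F)ˣ) : Matrix (Fin n) (Fin n) F) * X *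
        ((c⁻¹ : (Matrix (Fin n) (Fin n) F)ˣ) : Matrix (Fin n) (Fin n) F) :=
  rfl

theorem isUnit_one_add (X : P.patternAlg F) : IsUnit (1 + (X : Matrix (Fin n) (Fin n) F)) :=
  IsNilpotent.isUnit_one_add ⟨n, pow_card_eq_zero X.2⟩

noncomputable def patternGroupEquiv : P.patternGroup F ≃ P.patternAlg F where
  toFun g := ⟨((g : (Matrix (Fin n) (Fin n) F)ˣ) : Matrix (Fin n) (Fin n) F) - 1, g.2⟩
  invFun X := ⟨(P.isUnit_one_add F X).unit, show _ - 1 ∈ P.patternAlg F by simp⟩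
  left_inv g := Subtype.ext (Units.ext (by simp))
  right_inv X := Subtype.ext (by simp)

theorem patternGroupEquiv_conj (c g : P.patternGroup F) :
    P.patternGroupEquiv F (c * g * c⁻¹) = c • P.patternGroupEquiv F g :=
  Subtype.ext <| by
    rw [coe_smul_patternAlg]
    simp [patternGroupEquiv, mul_sub, sub_mul]

theorem card_orbitRel_quotient_dual [Finite F] :
    Nat.card (orbitRel.Quotient (P.patternGroup F) (Dual F (P.patternAlg F))) =
      Nat.card (orbitRel.Quotient (P.patternGroup F) (P.patternAlg F)) := by
  have := Module.finite_of_finite F (M := Dual F (P.patternAlg F))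
  refine card_orbitRel_quotient_eq_of_card_fixedBy_eq fun g => ?_
  rw [← fixedBy_inv (α := P.patternAlg F) g]
  exact (P.adRep F g⁻¹).card_fixedPoints_dualMap

end PatternPoset

theorem coadjoint_eq_adjoint_eq_classes_general (n : ℕ) (P : PatternPoset n)
    (F : Type) [Field F] [Fintype F] :
    coadjOrbitCount n P F = adjOrbitCount n P F ∧
    adjOrbitCount n P F = Nat.card (ConjClasses (P.patternGroup F)) := by
  have hAdj : adjOrbitCount n P F =
      Nat.card (orbitRel.Quotient (P.patternGroup F) (P.patternAlg F)) :=
    card_orbitSets_eq_card_orbitRel_quotient (G := P.patternGroup F)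
  have hCoadj : coadjOrbitCount n P F =
      Nat.card (orbitRel.Quotient (P.patternGroup F) (Dual F (P.patternAlg F))) :=
    card_orbitSets_eq_card_orbitRel_quotient (G := P.patternGroup F)
  rw [hAdj, hCoadj]
  exact ⟨P.card_orbitRel_quotient_dual F,
    (card_conjClasses_eq_card_orbitRel_quotient _ (P.patternGroupEquiv_conj F)).symm⟩

/-- **Lemma 3.2**: the number of co-adjoint orbits equals the number of adjoint orbits,
and both equal the number of conjugacy classes `k(U_P(q))`. -/
theorem coadjoint_eq_adjoint_eq_classes (n : ℕ) (P : PatternPoset n)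
    (F : Type) [Field F] [Fintype F] (hq : IsPrimePow (Fintype.card F)) :
    coadjOrbitCount n P F = adjOrbitCount n P F ∧
    adjOrbitCount n P F = Nat.card (ConjClasses (P.patternGroup F)) :=
  coadjoint_eq_adjoint_eq_classes_general n P F
end

section
/- Let P, Q, and R be finite posets and suppose P strongly embeds into Q in k steps (P ↪_k Q). Then P + R strongly embeds into Q + R + C_k in 2k steps: (P + R) ↪_{2k} (Q + R + C_k), where + denotes lexicographic sum and C_k is the k-element chain. -/
/-- A finite poset: a bundled finite type with a partial order. -/
structure FinPoset : Type 1 where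
  carrier : Type
  [fintype : Fintype carrier]
  [str : PartialOrder carrier]

attribute [instance] FinPoset.fintype FinPoset.str

namespace FinPoset

/-- The `n`-element chain `C_n`. -/
def chain (n : ℕ) : FinPoset := { carrier := Fin n }

/-- The lexicographic sum `P + Q`: place `Q` above `P`. -/
def lexSum (P Q : FinPoset) : FinPoset where
  carrier := P.carrier ⊕ₗ Q.carrier
  fintype := inferInstanceAs (Fintype (P.carrier ⊕ Q.carrier))

/-- The disjoint union `P ⨿ Q`. -/
def disjUnion (P Q : FinPoset) : FinPoset where
  carrier := P.carrier ⊕ Q.carrier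

/-- The induced subposet `P − m` on the complement of `{m}`. -/
noncomputable def erase (P : FinPoset) (m : P.carrier) : FinPoset where
  carrier := {x : P.carrier // x ≠ m}
  fintype := @Subtype.fintype _ _ (fun _ => Classical.propDecidable _) _

/-- The relation of the poset `D(S)` for the poset system `S = (P, m, {a})`:
delete from `P` the relations `(a, x)` with `a ≺ x ≺ m`. -/
def DRel (P : FinPoset) (m a : P.carrier) (x y : P.carrier) : Prop :=
  x < y ∧ ¬ (x = a ∧ y < m)

end FinPoset

/-- One step of a strong embedding sequence: there is a poset system
`S = (Q, m, {a})` with `P ≅ D(S) − m`. -/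
def StepEmbed (P Q : FinPoset) : Prop :=
  ∃ (m a : Q.carrier), (∀ x, ¬ m < x) ∧ a < m ∧
    Nonempty (RelIso (fun x y : P.carrier => x < y)
      (fun x y : {z : Q.carrier // z ≠ m} => Q.DRel m a x.1 y.1))

/-- `P` strongly embeds into `Q` in `n` steps, written `P ↪_n Q`:
there are poset systems `S_1, …, S_n` with `S_i = (P_i, m_i, {a_i})`, `P_0 = P`,
`P_n = Q`, and `P_i ≅ D(S_{i+1}) − m_{i+1}` for `0 ≤ i < n`. -/
def StrongEmbedN : ℕ → FinPoset → FinPoset → Prop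
  | 0, P, Q => Nonempty (P.carrier ≃o Q.carrier)
  | n + 1, P, Q => ∃ R : FinPoset, StrongEmbedN n P R ∧ StepEmbed R Q

/-- `P` strongly embeds into `Q`. -/
def StrongEmbed (P Q : FinPoset) : Prop := ∃ n, StrongEmbedN n P Q

/-!
One step becomes two. If `T ≅ D(Q, m, {a}) − m`, let `X` be `Q + S` with every relation `m < x`
deleted. Then `m` is maximal in `X` and `T + S ≅ D(X, m, {a}) − m`, while
`X ≅ D((Q + S) + C_1, ⊤, {m}) − ⊤`. Taking `S = R + C_k` and using `C_k + C_1 ≅ C_{k+1}`, each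
step `T ↪_1 Q` of `P ↪_k Q` yields `T + R + C_k ↪_2 Q + R + C_{k+1}`.
-/

namespace FinPoset

section LexSum

variable {P Q : FinPoset}

-- The order is named through the carrier: `(Sum.inl a : (P.lexSum Q).carrier) < Sum.inl b` would
-- elaborate at `P.carrier ⊕ Q.carrier` and use the componentwise order of `Sum` instead.

@[simp] theorem lexSum_inl_lt_inl {a b : P.carrier} :
    @LT.lt (P.lexSum Q).carrier _ (.inl a) (.inl b) ↔ a < b := Sum.Lex.inl_lt_inl_iff

@[simp] theorem lexSum_inr_lt_inr {a b : Q.carrier} :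
    @LT.lt (P.lexSum Q).carrier _ (.inr a) (.inr b) ↔ a < b := Sum.Lex.inr_lt_inr_iff

@[simp] theorem lexSum_inl_lt_inr {a : P.carrier} {b : Q.carrier} :
    @LT.lt (P.lexSum Q).carrier _ (.inl a) (.inr b) := Sum.Lex.inl_lt_inr a b

@[simp] theorem lexSum_not_inr_lt_inl {a : P.carrier} {b : Q.carrier} :
    ¬ @LT.lt (P.lexSum Q).carrier _ (.inr b) (.inl a) := Sum.Lex.not_inr_lt_inl

@[simp] theorem lexSum_inl_inj {a b : P.carrier} :
    @Eq (P.lexSum Q).carrier (.inl a) (.inl b) ↔ a = b := Sum.inl_injective.eq_iff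

end LexSum

def lexSumCongr {P P' Q Q' : FinPoset} (e : P.carrier ≃o P'.carrier)
    (f : Q.carrier ≃o Q'.carrier) : (P.lexSum Q).carrier ≃o (P'.lexSum Q').carrier :=
  OrderIso.sumLexCongr e f

def lexSumAssoc (P Q R : FinPoset) :
    ((P.lexSum Q).lexSum R).carrier ≃o (P.lexSum (Q.lexSum R)).carrier :=
  OrderIso.sumLexAssoc P.carrier Q.carrier R.carrier

def lexSumChainZero (P : FinPoset) : (P.lexSum (chain 0)).carrier ≃o P.carrier :=
  OrderIso.sumLexEmpty (β := Fin 0)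

def chainLexSumChain (k l : ℕ) :
    ((chain k).lexSum (chain l)).carrier ≃o (chain (k + l)).carrier :=
  (Fintype.orderIsoFinOfCardEq (Fin k ⊕ₗ Fin l) (by simp)).symm

def detachAbove (Z : FinPoset) (a : Z.carrier) : FinPoset where
  carrier := Z.carrier
  str := @partialOrderOfSO _ (fun x y => x < y ∧ x ≠ a)
    { irrefl := fun x h => lt_irrefl x h.1
      trans := fun _ _ _ h₁ h₂ => ⟨h₁.1.trans h₂.1, h₁.2⟩ }

@[simp] theorem detachAbove_lt_iff {Z : FinPoset} {a x y : Z.carrier} :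
    @LT.lt (Z.detachAbove a).carrier _ x y ↔ x < y ∧ x ≠ a := Iff.rfl

theorem dRel_detachAbove {Z : FinPoset} {a m b x y : Z.carrier} :
    (Z.detachAbove a).DRel m b x y ↔ (x < y ∧ ¬ x = a) ∧ ¬ (x = b ∧ y < m ∧ ¬ y = a) := Iff.rfl

theorem stepEmbed_detachAbove_lexSum {Z U : FinPoset} (a : Z.carrier) (u : U.carrier)
    (hu : ∀ v, v = u) : StepEmbed (Z.detachAbove a) (Z.lexSum U) := by
  let f : (Z.detachAbove a).carrier ≃ {z : (Z.lexSum U).carrier // z ≠ .inr u} :=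
    { toFun x := ⟨.inl x, Sum.inl_ne_inr⟩
      invFun
        | ⟨.inl x, _⟩ => x
        | ⟨.inr v, h⟩ => absurd (congrArg _ (hu v)) h
      left_inv _ := rfl
      right_inv := by
        rintro ⟨x | v, h⟩
        · rfl
        · exact absurd (congrArg _ (hu v)) h }
  refine ⟨.inr u, .inl a, ?_, lexSum_inl_lt_inr, ⟨f, ?_⟩⟩
  · rintro (x | v) h
    · exact lexSum_not_inr_lt_inl h
    · exact (lexSum_inr_lt_inr.1 h).ne (hu v).symm
  · intro (x : Z.carrier) (y : Z.carrier)
    simp [f, DRel]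

theorem stepEmbed_lexSum_detachAbove {T Q S : FinPoset} {m a : Q.carrier} (ham : a < m)
    (e : RelIso (fun x y : T.carrier => x < y)
      (fun x y : {z : Q.carrier // z ≠ m} => Q.DRel m a x.1 y.1)) :
    StepEmbed (T.lexSum S) ((Q.lexSum S).detachAbove (.inl m)) := by
  let f : (T.lexSum S).carrier ≃
      {z : ((Q.lexSum S).detachAbove (.inl m)).carrier // z ≠ .inl m} :=
    { toFun
        | .inl t => ⟨.inl (e t), fun h => (e t).2 (Sum.inl_injective h)⟩
        | .inr s => ⟨.inr s, Sum.inr_ne_inl⟩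
      invFun
        | ⟨.inl q, hq⟩ => .inl (e.symm ⟨q, fun h => hq (congrArg _ h)⟩)
        | ⟨.inr s, _⟩ => .inr s
      left_inv := by
        rintro (t | s)
        · simp
        · rfl
      right_inv := by rintro ⟨q | s, h⟩ <;> simp }
  refine ⟨.inl m, .inl a, fun _ h => h.2 rfl,
    (detachAbove_lt_iff (Z := Q.lexSum S)).2
      ⟨lexSum_inl_lt_inl.2 ham, fun h => ham.ne (Sum.inl_injective h)⟩, ⟨f, ?_⟩⟩
  intro x y
  refine dRel_detachAbove.trans ?_
  rcases x with t₁ | s₁ <;> rcases y with t₂ | s₂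
  · simp only [f, Equiv.coe_fn_mk, lexSum_inl_lt_inl]
    rw [← e.map_rel_iff]
    generalize e t₁ = q₁, e t₂ = q₂
    obtain ⟨q₁, hq₁⟩ := q₁
    obtain ⟨q₂, hq₂⟩ := q₂
    simp [DRel, hq₁, hq₂]
  · simpa [f] using (e t₁).2
  all_goals simp [f]

end FinPoset

open FinPoset

namespace StepEmbed

theorem orderIso_trans {P P' Q : FinPoset} (e : P.carrier ≃o P'.carrier)
    (h : StepEmbed P' Q) : StepEmbed P Q := by
  obtain ⟨m, a, hm, ham, ⟨f⟩⟩ := h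
  exact ⟨m, a, hm, ham, ⟨e.toRelIsoLT.trans f⟩⟩

theorem trans_orderIso {P Q Q' : FinPoset} (h : StepEmbed P Q)
    (e : Q.carrier ≃o Q'.carrier) : StepEmbed P Q' := by
  obtain ⟨m, a, hm, ham, ⟨f⟩⟩ := h
  refine ⟨e m, e a, fun x hx => hm (e.symm x) ?_, e.lt_iff_lt.2 ham,
    ⟨f.trans ⟨e.toEquiv.subtypeEquiv fun z => e.injective.ne_iff.symm, ?_⟩⟩⟩
  · simpa using e.symm.lt_iff_lt.2 hx
  · intro x y
    simp [DRel]

theorem lexSum {T Q : FinPoset} (h : StepEmbed T Q) (S : FinPoset) :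
    ∃ X, StepEmbed (T.lexSum S) X ∧ StepEmbed X ((Q.lexSum S).lexSum (chain 1)) := by
  obtain ⟨m, a, -, ham, ⟨e⟩⟩ := h
  exact ⟨_, stepEmbed_lexSum_detachAbove ham e,
    stepEmbed_detachAbove_lexSum _ (0 : Fin 1) fun v => Fin.fin_one_eq_zero v⟩

theorem lexSum_lexSum_chain {T Q : FinPoset} (h : StepEmbed T Q) (R : FinPoset) (k : ℕ) :
    ∃ X, StepEmbed ((T.lexSum R).lexSum (chain k)) X ∧
      StepEmbed X ((Q.lexSum R).lexSum (chain (k + 1))) := by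
  obtain ⟨X, hTX, hXQ⟩ := h.lexSum (R.lexSum (chain k))
  refine ⟨X, hTX.orderIso_trans (lexSumAssoc _ _ _), hXQ.trans_orderIso ?_⟩
  exact (lexSumAssoc _ _ _).trans <| (lexSumCongr (.refl _) <| (lexSumAssoc _ _ _).trans <|
    lexSumCongr (.refl _) (chainLexSumChain k 1)).trans (lexSumAssoc _ _ _).symm

end StepEmbed

/-- **Lemma 5.4**: if `P ↪_k Q` then `P + R ↪_{2k} Q + R + C_k`. -/
theorem strongEmbed_lexSum (P Q R : FinPoset) (k : ℕ) (h : StrongEmbedN k P Q) :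
    StrongEmbedN (2 * k) (P.lexSum R) ((Q.lexSum R).lexSum (FinPoset.chain k)) := by
  induction k generalizing Q with
  | zero =>
    obtain ⟨e⟩ := h
    exact ⟨(lexSumCongr e (.refl _)).trans (lexSumChainZero _).symm⟩
  | succ k ih =>
    obtain ⟨T, hPT, hTQ⟩ := h
    obtain ⟨X, hTX, hXQ⟩ := hTQ.lexSum_lexSum_chain R k
    exact ⟨X, ⟨_, ih T hPT, hTX⟩, hXQ⟩
end

section
/- Let P be a finite poset and m a maximal element of P, and set k = |P| − |lb_P(m)| − 1, where lb_P(m) = {x : x ≺ m}. Then P strongly embeds into (P − m) + C_{k+1} in k steps: P ↪_k ((P − m) + C_{k+1}). -/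
/-!
Write `β = P − m` and let `T` be the up-set of elements of `β` not below `m`. Then `P` is `β`
with a one-element chain placed above `β \ T` and incomparable with `T`. More generally,
order `β ⊕ C_n` so that the chain `C_n` lies above `β \ T` and is incomparable with `T`, for an
up-set `T`. Deleting a minimal element `v` from `T` while adding a new top `t` to the chain is
one strong-embedding step: for `S = (·, t, {v})`, passing to `D(S) − t` deletes exactly the
relations from `v` to the old chain, because every element above `v` lies in `T`. After
`|T| = k` such steps `T` is empty and the poset is `(P − m) + C_{k+1}`.
-/
namespace FinPoset

abbrev of (α : Type) [Fintype α] [PartialOrder α] : FinPoset := ⟨α⟩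

end FinPoset

namespace StepEmbed

theorem of_injective {α γ : Type} [Fintype α] [PartialOrder α] [Fintype γ] [PartialOrder γ]
    {m a : γ} (hm : ∀ x, ¬ m < x) (ham : a < m) {f : α → γ} (hf : Function.Injective f)
    (hfm : ∀ x, f x ≠ m) (hsurj : ∀ z, z ≠ m → ∃ x, f x = z)
    (hlt : ∀ x y, x < y ↔ f x < f y ∧ ¬ (f x = a ∧ f y < m)) :
    StepEmbed (.of α) (.of γ) :=
  ⟨m, a, hm, ham, ⟨⟨Equiv.ofBijective (fun x => ⟨f x, hfm x⟩)
    ⟨fun _ _ h => hf (congrArg Subtype.val h),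
      fun z => (hsurj z z.2).imp fun _ h => Subtype.ext h⟩, (hlt _ _).symm⟩⟩⟩

theorem congr_right {R Q Q' : FinPoset} (h : StepEmbed R Q) (e : Q.carrier ≃o Q'.carrier) :
    StepEmbed R Q' := by
  obtain ⟨m, a, hm, ham, ⟨g⟩⟩ := h
  refine ⟨e m, e a, fun x hx => hm _ (e.lt_symm_apply.mpr hx), e.strictMono ham,
    ⟨g.trans ⟨e.toEquiv.subtypeEquiv fun _ => e.injective.ne_iff.symm, ?_⟩⟩⟩
  intro x y
  simp [FinPoset.DRel]

end StepEmbed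

namespace StrongEmbedN

theorem congr_left {n : ℕ} {P P' Q : FinPoset} (e : P'.carrier ≃o P.carrier)
    (h : StrongEmbedN n P Q) : StrongEmbedN n P' Q := by
  induction n generalizing Q with
  | zero => obtain ⟨f⟩ := h; exact ⟨e.trans f⟩
  | succ n ih => obtain ⟨R, hPR, hRQ⟩ := h; exact ⟨R, ih hPR, hRQ⟩

theorem congr_right {n : ℕ} {P Q Q' : FinPoset} (h : StrongEmbedN n P Q)
    (e : Q.carrier ≃o Q'.carrier) : StrongEmbedN n P Q' := by
  cases n with
  | zero => obtain ⟨f⟩ := h; exact ⟨f.trans e⟩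
  | succ n => obtain ⟨R, hPR, hRQ⟩ := h; exact ⟨R, hPR, hRQ.congr_right e⟩

theorem cons {n : ℕ} {P R Q : FinPoset} (hPR : StepEmbed P R) (hRQ : StrongEmbedN n R Q) :
    StrongEmbedN (n + 1) P Q := by
  induction n generalizing Q with
  | zero => obtain ⟨e⟩ := hRQ; exact ⟨P, ⟨OrderIso.refl _⟩, hPR.congr_right e⟩
  | succ n ih => obtain ⟨R', hRR', hR'Q⟩ := hRQ; exact ⟨R', ih hRR', hR'Q⟩

end StrongEmbedN

lemma UpperSet.mem_erase_of_minimal {α : Type*} [PartialOrder α] {s : UpperSet α} {a x : α}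
    (ha : Minimal (· ∈ s) a) : x ∈ s.erase a ↔ x ∈ s ∧ x ≠ a := by
  change x ∈ s ∧ ¬ x ≤ a ↔ _
  exact and_congr_right fun hx => ⟨fun h hxa => h hxa.le, fun h hxa => h (ha.eq_of_le hx hxa)⟩

lemma UpperSet.ncard_erase_add_one {α : Type*} [PartialOrder α] [Finite α] {s : UpperSet α}
    {a : α} (ha : Minimal (· ∈ s) a) : (s.erase a : Set α).ncard + 1 = (s : Set α).ncard := by
  have : (s.erase a : Set α) = (s : Set α) \ {a} := by
    ext x
    exact mem_erase_of_minimal ha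
  rw [this, Set.ncard_sdiff_singleton_add_one ha.prop]

-- The up-set `T` leaves the carrier alone: it only enters through the order below.
def ChainAbove {β : Type} [PartialOrder β] (_T : UpperSet β) (n : ℕ) : Type := β ⊕ Fin n

namespace ChainAbove

variable {β : Type} [PartialOrder β] {T : UpperSet β} {n : ℕ} {x y : β} {i j : Fin n}

def base (x : β) : ChainAbove T n := Sum.inl x

def chain (i : Fin n) : ChainAbove T n := Sum.inr i

@[elab_as_elim, induction_eliminator, cases_eliminator]
def recBaseChain {motive : ChainAbove T n → Sort*} (base : ∀ x, motive (base x))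
    (chain : ∀ i, motive (chain i)) : ∀ a, motive a
  | .inl x => base x
  | .inr i => chain i

instance : LE (ChainAbove T n) where
  le
  | .inl x, .inl y => x ≤ y
  | .inl x, .inr _ => x ∉ T
  | .inr _, .inl _ => False
  | .inr i, .inr j => i ≤ j

@[simp] lemma base_le_base : (base x : ChainAbove T n) ≤ base y ↔ x ≤ y := Iff.rfl
@[simp] lemma base_le_chain : (base x : ChainAbove T n) ≤ chain i ↔ x ∉ T := Iff.rfl
@[simp] lemma not_chain_le_base : ¬ (chain i : ChainAbove T n) ≤ base x := id
@[simp] lemma chain_le_chain : (chain i : ChainAbove T n) ≤ chain j ↔ i ≤ j := Iff.rfl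

@[simp] lemma base_inj : (base x : ChainAbove T n) = base y ↔ x = y := Sum.inl_injective.eq_iff
@[simp] lemma chain_inj : (chain i : ChainAbove T n) = chain j ↔ i = j := Sum.inr_injective.eq_iff
@[simp] lemma base_ne_chain : (base x : ChainAbove T n) ≠ chain i := Sum.inl_ne_inr
@[simp] lemma chain_ne_base : (chain i : ChainAbove T n) ≠ base x := Sum.inr_ne_inl

instance : PartialOrder (ChainAbove T n) where
  le_refl a := by cases a <;> simp
  le_trans a b c := by
    cases a <;> cases b <;> cases c <;> simp
    · exact le_trans
    · exact fun hxy hy hx => hy (T.upper hxy hx)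
    · exact fun hx _ => hx
    · exact le_trans
  le_antisymm a b := by
    cases a <;> cases b <;> simp <;> exact le_antisymm

@[simp] lemma base_lt_base : (base x : ChainAbove T n) < base y ↔ x < y := by
  simp only [lt_iff_le_not_ge, base_le_base]
@[simp] lemma base_lt_chain : (base x : ChainAbove T n) < chain i ↔ x ∉ T := by
  simp only [lt_iff_le_not_ge, base_le_chain, not_chain_le_base, not_false_eq_true, and_true]
@[simp] lemma not_chain_lt_base : ¬ (chain i : ChainAbove T n) < base x := by
  simp only [lt_iff_le_not_ge, not_chain_le_base, false_and, not_false_eq_true]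
@[simp] lemma chain_lt_chain : (chain i : ChainAbove T n) < chain j ↔ i < j := by
  simp only [lt_iff_le_not_ge, chain_le_chain]

def castSucc (T' : UpperSet β) : ChainAbove T n → ChainAbove T' (n + 1)
  | .inl x => base x
  | .inr i => chain i.castSucc

@[simp] lemma castSucc_base {T' : UpperSet β} (x : β) :
    castSucc T' (base x : ChainAbove T n) = base x := rfl
@[simp] lemma castSucc_chain {T' : UpperSet β} (i : Fin n) :
    castSucc T' (chain i : ChainAbove T n) = chain i.castSucc := rfl

instance [Fintype β] : Fintype (ChainAbove T n) := inferInstanceAs (Fintype (β ⊕ Fin n))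

def topOrderIsoSumLex (β : Type) [PartialOrder β] (n : ℕ) :
    ChainAbove (⊤ : UpperSet β) n ≃o β ⊕ₗ Fin n where
  toEquiv := toLex
  map_rel_iff' {a b} := by
    cases a <;> cases b
    · exact Sum.Lex.inl_le_inl_iff.trans base_le_base.symm
    · exact iff_of_true (Sum.Lex.inl_le_inr _ _) (base_le_chain.mpr UpperSet.notMem_top)
    · exact iff_of_false Sum.Lex.not_inr_le_inl not_chain_le_base
    · exact Sum.Lex.inr_le_inr_iff.trans chain_le_chain.symm

end ChainAbove

namespace ChainAbove

variable {β : Type} [PartialOrder β] [Fintype β]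

theorem stepEmbed_erase {T : UpperSet β} {v : β} (hv : Minimal (· ∈ T) v) (n : ℕ) :
    StepEmbed (.of (ChainAbove T n)) (.of (ChainAbove (T.erase v) (n + 1))) := by
  have hmem (x : β) := UpperSet.mem_erase_of_minimal (x := x) hv
  refine StepEmbed.of_injective (m := chain (Fin.last n)) (a := base v) (f := castSucc _)
    ?_ ?_ ?_ ?_ ?_ ?_
  · intro x; cases x <;> simp [Fin.le_last]
  · simp [hmem]
  · intro x y; cases x <;> cases y <;> simp
  · intro x; cases x <;> simp
  · intro z hz
    cases z with
    | base y => exact ⟨base y, rfl⟩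
    | chain j => exact ⟨chain (j.castPred (by simpa using hz)), by simp⟩
  · intro x y
    cases x with
    | base x =>
      cases y with
      | base y =>
        simp only [castSucc_base, base_lt_base, base_inj, base_lt_chain, hmem, not_and, not_not,
          iff_self_and]
        rintro hxy rfl h
        exact hxy.ne' (h (T.upper hxy.le hv.prop))
      | chain j =>
        simp only [castSucc_base, castSucc_chain, base_lt_chain, chain_lt_chain, base_inj, hmem,
          Fin.castSucc_lt_last, and_true, not_and, not_not]
        exact ⟨fun hx => ⟨fun h => absurd h hx, fun h => hx (h ▸ hv.prop)⟩,
          fun h hx => h.2 (h.1 hx)⟩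
    | chain i => cases y <;> simp

-- `⊤ : UpperSet β` is the empty up-set.
theorem strongEmbedN_top (T : UpperSet β) (n : ℕ) :
    StrongEmbedN (T : Set β).ncard (.of (ChainAbove T n))
      (.of (ChainAbove (⊤ : UpperSet β) ((T : Set β).ncard + n))) := by
  induction hk : (T : Set β).ncard generalizing T n with
  | zero =>
    obtain rfl : T = ⊤ := SetLike.coe_injective ((Set.ncard_eq_zero).mp hk)
    rw [zero_add]
    exact ⟨OrderIso.refl _⟩
  | succ k ih =>
    obtain ⟨v, hv⟩ := exists_minimal_of_wellFoundedLT (· ∈ T)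
      (Set.nonempty_of_ncard_ne_zero (hk ▸ k.succ_ne_zero))
    have hrec := ih (T.erase v) (n + 1) (by have := UpperSet.ncard_erase_add_one hv; omega)
    rw [Nat.add_right_comm]
    exact StrongEmbedN.cons (stepEmbed_erase hv n) hrec

end ChainAbove

def notBelow {α : Type} [PartialOrder α] (m : α) : UpperSet {x : α // x ≠ m} :=
  ⟨{x | ¬ x.1 < m}, fun _ _ hxy hx hy => hx (lt_of_le_of_lt hxy hy)⟩

lemma ncard_notBelow {α : Type} [PartialOrder α] [Fintype α] (m : α) :
    ((notBelow m : UpperSet {x : α // x ≠ m}) : Set {x : α // x ≠ m}).ncard =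
      Fintype.card α - Nat.card {x // x < m} - 1 := by
  classical
  have hne : Fintype.card {x : α // x ≠ m} = Fintype.card α - 1 := by
    rw [Fintype.card_subtype_compl, Fintype.card_subtype_eq]
  have hlt : Fintype.card {x : {x : α // x ≠ m} // x.1 < m} = Fintype.card {x // x < m} :=
    Fintype.card_congr (Equiv.subtypeSubtypeEquivSubtype ne_of_lt)
  calc ((notBelow m : UpperSet _) : Set {x : α // x ≠ m}).ncard
      = Nat.card {x : {x : α // x ≠ m} // ¬ x.1 < m} := rfl
    _ = Fintype.card {x : {x : α // x ≠ m} // ¬ x.1 < m} := Nat.card_eq_fintype_card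
    _ = Fintype.card α - Nat.card {x // x < m} - 1 := by
      rw [Fintype.card_subtype_compl, hne, hlt, Nat.card_eq_fintype_card, Nat.sub_right_comm]

def ChainAbove.orderIsoOfMaximal {α : Type} [PartialOrder α] [DecidableEq α] {m : α}
    (hm : ∀ x, ¬ m < x) : ChainAbove (notBelow m) 1 ≃o α where
  toEquiv := (Equiv.sumCongr (Equiv.refl _) finOneEquiv).trans
    ((Equiv.optionEquivSumPUnit _).symm.trans (Equiv.optionSubtypeNe m))
  map_rel_iff' {a b} := by
    cases a with
    | base x =>
      cases b with
      | base y => exact Iff.rfl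
      | chain j => exact x.2.le_iff_lt.trans not_not.symm
    | chain i =>
      cases b with
      | base y =>
        exact iff_of_false (fun h => hm _ (h.lt_of_ne (Ne.symm y.2))) ChainAbove.not_chain_le_base
      | chain j => exact iff_of_true le_rfl (Subsingleton.elim i j).le

/-- **Lemma 5.5**: if `m` is a maximal element of `P` and
`k = |P| − |lb_P(m)| − 1`, then `P ↪_k (P − m) + C_{k+1}`. -/
theorem strongEmbed_erase_max (P : FinPoset) (m : P.carrier) (hm : ∀ x, ¬ m < x) :
    StrongEmbedN (Fintype.card P.carrier - Nat.card {x : P.carrier // x < m} - 1) P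
      ((P.erase m).lexSum (FinPoset.chain
        (Fintype.card P.carrier - Nat.card {x : P.carrier // x < m} - 1 + 1))) := by
  classical
  rw [← ncard_notBelow m]
  exact ((ChainAbove.strongEmbedN_top (notBelow m) 1).congr_left
    (ChainAbove.orderIsoOfMaximal hm).symm).congr_right (ChainAbove.topOrderIsoSumLex _ _)
end

section
/- For all nonnegative integers a and b, the disjoint union of chains C_a ⊔ C_b strongly embeds into the chain C_{2a+b}. -/
/-!
Write `Y(p, q, r)` (`FinPoset.fork p q r`) for a chain of length `p` carrying two incomparable
chains of lengths `q` and `r` on top of it. Then `C_a ⨿ C_b ≅ Y(0, a, b)` and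
`Y(p, 0, r) ≅ C_{p+r}`. In `Y(p+1, q, r+1)` take `m` the top of the second branch and `a` the top
of the stem: cutting `a` loose from the second branch below `m` and deleting `m` makes `a` the
bottom of the first branch, so `Y(p, q+1, r) ↪ Y(p+1, q, r+1)` in one step. After `a` steps,
`Y(0, a, b)` has become `Y(a, 0, b+a) ≅ C_{2a+b}`.
-/

theorem StepEmbed.trans_orderIso_s19 {P Q Q' : FinPoset} (h : StepEmbed P Q)
    (e : Q.carrier ≃o Q'.carrier) : StepEmbed P Q' := by
  obtain ⟨m, a, hm, ham, ⟨f⟩⟩ := h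
  refine ⟨e m, e a, fun x => by simpa [← e.lt_symm_apply] using hm (e.symm x),
    e.lt_iff_lt.2 ham, ⟨f.trans ?_⟩⟩
  exact
    { toEquiv := e.toEquiv.subtypeEquiv fun _ => e.injective.ne_iff.symm
      map_rel_iff' := by simp [FinPoset.DRel] }

theorem StrongEmbedN.orderIso_trans {P P' Q : FinPoset} :
    ∀ {n : ℕ}, (P.carrier ≃o P'.carrier) → StrongEmbedN n P' Q → StrongEmbedN n P Q
  | 0, e, ⟨f⟩ => ⟨e.trans f⟩
  | _ + 1, e, ⟨R, hR, hstep⟩ => ⟨R, orderIso_trans e hR, hstep⟩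

theorem StrongEmbedN.trans_orderIso_s19 {P Q Q' : FinPoset} :
    ∀ {n : ℕ}, StrongEmbedN n P Q → (Q.carrier ≃o Q'.carrier) → StrongEmbedN n P Q'
  | 0, ⟨f⟩, e => ⟨f.trans e⟩
  | _ + 1, ⟨R, hR, hstep⟩, e => ⟨R, hR, hstep.trans_orderIso_s19 e⟩

namespace FinPoset

/-- Indices `< p` form the stem, `[p, p + q)` the first branch and `[p + q, p + q + r)` the
second; `i` lies below `j` when `i < j` and `i` is on the stem or on the same branch as `j`. -/
def ForkLt (p q i j : ℕ) : Prop := i < j ∧ (i < p ∨ (i < p + q ↔ j < p + q))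

def fork (p q r : ℕ) : FinPoset where
  carrier := Fin (p + q + r)
  str :=
  { le := fun i j => i = j ∨ ForkLt p q i.val j.val
    lt := fun i j => ForkLt p q i.val j.val
    le_refl := fun _ => Or.inl rfl
    le_trans := fun _ _ _ => by simp only [ForkLt, Fin.ext_iff]; omega
    lt_iff_le_not_ge := fun _ _ => by simp only [ForkLt, Fin.ext_iff]; omega
    le_antisymm := fun _ _ => by simp only [ForkLt, Fin.ext_iff]; omega }

theorem fork_lt_iff {p q r : ℕ} (i j : (fork p q r).carrier) :
    i < j ↔ ForkLt p q i.val j.val := Iff.rfl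

theorem fork_le_iff {p q r : ℕ} (i j : (fork p q r).carrier) :
    i ≤ j ↔ i = j ∨ ForkLt p q i.val j.val := Iff.rfl

theorem fork_ext_iff {p q r : ℕ} {i j : (fork p q r).carrier} : i = j ↔ i.val = j.val :=
  Fin.ext_iff

theorem stepEmbed_fork (p q r : ℕ) : StepEmbed (fork p (q + 1) r) (fork (p + 1) q (r + 1)) := by
  let m : (fork (p + 1) q (r + 1)).carrier := Fin.last (p + 1 + q + r)
  let a : (fork (p + 1) q (r + 1)).carrier := ⟨p, by omega⟩
  let e : (fork p (q + 1) r).carrier ≃ {z // z ≠ m} :=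
    { toFun i := ⟨⟨i.val, by omega⟩, fun h => by
        have := fork_ext_iff.1 h
        simp only [m, Fin.val_last] at this
        omega⟩
      invFun z := ⟨z.1.val, by
        have := fork_ext_iff.not.1 z.2
        simp only [m, Fin.val_last] at this
        omega⟩
      left_inv _ := rfl
      right_inv _ := rfl }
  have he : ∀ i, (e i).1.val = i.val := fun _ => rfl
  have ha : a.val = p := rfl
  refine ⟨m, a, fun x => ?_, ?_, ⟨e, fun {i j} => ?_⟩⟩
  · rw [fork_lt_iff]
    simp only [m, ForkLt, Fin.val_last]
    omega
  · rw [fork_lt_iff]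
    simp only [m, ha, ForkLt, Fin.val_last]
    omega
  · dsimp only [DRel]
    rw [fork_lt_iff, fork_lt_iff, fork_lt_iff, fork_ext_iff]
    simp only [he, ha, m, ForkLt, Fin.val_last]
    omega

theorem strongEmbedN_fork (p q r : ℕ) :
    ∀ k, StrongEmbedN k (fork p (k + q) r) (fork (p + k) q (r + k))
  | 0 => by rw [Nat.zero_add]; exact ⟨OrderIso.refl _⟩
  | k + 1 => ⟨fork (p + k) (q + 1) (r + k),
      Nat.add_right_comm k 1 q ▸ strongEmbedN_fork p (q + 1) r k,
      stepEmbed_fork (p + k) q (r + k)⟩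

def forkOrderIsoChain {p r n : ℕ} (h : p + r = n) :
    (fork p 0 r).carrier ≃o (chain n).carrier where
  toEquiv := finCongr h
  map_rel_iff' {i j} := by
    change i.val ≤ j.val ↔ i = j ∨ ForkLt p 0 i.val j.val
    rw [fork_ext_iff, ForkLt]
    omega

def disjUnionOrderIsoFork (q r : ℕ) :
    ((chain q).disjUnion (chain r)).carrier ≃o (fork 0 q r).carrier where
  toEquiv := finSumFinEquiv.trans (finCongr (by omega))
  map_rel_iff' {x y} := by
    rw [fork_le_iff, fork_ext_iff]
    revert x y
    change ∀ x y : Fin q ⊕ Fin r, _ ↔ x ≤ y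
    rintro (i | i) (j | j)
    · change i.val = j.val ∨ ForkLt 0 q i.val j.val ↔ _
      rw [Sum.inl_le_inl_iff, ForkLt, Fin.le_iff_val_le_val]
      omega
    · change i.val = q + j.val ∨ ForkLt 0 q i.val (q + j.val) ↔ _
      rw [iff_false_right Sum.not_inl_le_inr, ForkLt]
      omega
    · change q + i.val = j.val ∨ ForkLt 0 q (q + i.val) j.val ↔ _
      rw [iff_false_right Sum.not_inr_le_inl, ForkLt]
      omega
    · change q + i.val = q + j.val ∨ ForkLt 0 q (q + i.val) (q + j.val) ↔ _
      rw [Sum.inr_le_inr_iff, ForkLt, Fin.le_iff_val_le_val]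
      omega

end FinPoset

open FinPoset

/-- **Lemma 5.9**: `C_a ⨿ C_b ↪ C_{2a+b}` for all nonnegative integers `a` and `b`. -/
theorem chain_disjUnion_chain_strongEmbed (a b : ℕ) :
    StrongEmbed ((FinPoset.chain a).disjUnion (FinPoset.chain b))
      (FinPoset.chain (2 * a + b)) :=
  ⟨a, ((strongEmbedN_fork 0 0 b a).orderIso_trans (disjUnionOrderIsoFork a b)).trans_orderIso_s19
    (forkOrderIsoChain (by omega))⟩
end
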